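/- In a one-sided boundary labelling instance with n sites in general position inside an axis-aligned rectangle B and n ports on the top side of B, there always exists a feasible solution, i.e., a set of n pairwise-disjoint axis-aligned leaders each with at most one bend, each connecting a distinct site to a distinct port, lying in the interior of B except at the port endpoint. -/
import Mathlib


open Set MeasureTheory

abbrev Pt : Type := ℝ × ℝ

/-- An axis-aligned rectangle. -/
structure Rect where
  x0 : ℝ
  x1 : ℝ
  y0 : ℝ
  y1 : ℝ
  hx : x0 < x1
  hy : y0 < y1

/-- The open interior of a rectangle. -/
def Rect.inter (B : Rect) : Set Pt := Set.Ioo B.x0 B.x1 ×ˢ Set.Ioo B.y0 B.y1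

/-- The closed rectangle as a point set. -/
def Rect.closed (B : Rect) : Set Pt := Set.Icc B.x0 B.x1 ×ˢ Set.Icc B.y0 B.y1

/-- The (closed) top side of a rectangle. -/
def Rect.topSide (R : Rect) : Set Pt := {p | p.2 = R.y1 ∧ p.1 ∈ Set.Icc R.x0 R.x1}

/-- The (closed) left side of a rectangle. -/
def Rect.leftSide (R : Rect) : Set Pt := {p | p.1 = R.x0 ∧ p.2 ∈ Set.Icc R.y0 R.y1}

/-- Horizontal segment at height `y` between abscissae `xa` and `xb`. -/
def hSeg (xa xb y : ℝ) : Set Pt := {p | p.2 = y ∧ p.1 ∈ Set.uIcc xa xb}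

/-- Vertical segment at abscissa `x` between ordinates `ya` and `yb`. -/
def vSeg (x ya yb : ℝ) : Set Pt := {p | p.1 = x ∧ p.2 ∈ Set.uIcc ya yb}

/-- 1-bend po-leader to a port on the top or bottom side: a horizontal segment
from the site followed by a vertical segment ending at the port
(either segment may be degenerate). -/
def hvLeader (s p : Pt) : Set Pt := hSeg s.1 p.1 s.2 ∪ vSeg p.1 s.2 p.2

/-- 1-bend po-leader to a port on the left or right side: a vertical segment
from the site followed by a horizontal segment ending at the port. -/
def vhLeader (s p : Pt) : Set Pt := vSeg s.1 s.2 p.2 ∪ hSeg s.1 p.1 p.2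

/-- A one-sided boundary labelling instance: `n` sites in general position in the
interior of `B` and `n` ports on the (open) top side of `B`. -/
structure OneSided (n : ℕ) where
  B : Rect
  site : Fin n → Pt
  port : Fin n → Pt
  site_mem : ∀ i, site i ∈ B.inter
  port_top : ∀ i, (port i).2 = B.y1 ∧ (port i).1 ∈ Set.Ioo B.x0 B.x1
  gp_site_x : Function.Injective fun i => (site i).1
  gp_site_y : Function.Injective fun i => (site i).2
  gp_port_x : Function.Injective fun i => (port i).1
  gp_mix : ∀ i j, (site i).1 ≠ (port j).1

/-- The leader induced by the assignment `σ` at site `i`. -/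
def OneSided.leader {n : ℕ} (P : OneSided n) (σ : Equiv.Perm (Fin n)) (i : Fin n) : Set Pt :=
  hvLeader (P.site i) (P.port (σ i))

/-- A feasible solution: every leader lies in the interior of `B` except at its
port endpoint, and the leaders are pairwise disjoint. -/
def OneSided.Feasible {n : ℕ} (P : OneSided n) (σ : Equiv.Perm (Fin n)) : Prop :=
  (∀ i, P.leader σ i \ {P.port (σ i)} ⊆ P.B.inter) ∧
  (∀ i j, i ≠ j → Disjoint (P.leader σ i) (P.leader σ j))

lemma abs_split {a b c : ℝ} (h : c ∈ Set.uIcc a b) : |a - c| + |c - b| = |a - b| := by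
  rcases le_total a b with hab | hab
  · rw [Set.uIcc_of_le hab] at h
    rw [abs_of_nonpos (by linarith [h.1]), abs_of_nonpos (by linarith [h.2]),
      abs_of_nonpos (by linarith)]
    ring
  · rw [Set.uIcc_of_ge hab] at h
    rw [abs_of_nonneg (by linarith [h.2]), abs_of_nonneg (by linarith [h.1]),
      abs_of_nonneg (by linarith)]
    ring

lemma key {n : ℕ} (sx sy : Fin n → ℝ) (qx : Fin n → ℝ) (hq : Function.Injective qx) :
    ∃ σ : Equiv.Perm (Fin n), ∀ i j, sy j < sy i →
      qx (σ j) ∉ Set.uIcc (sx i) (qx (σ i)) := by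
  classical
  set f : Fin n → Fin n → ℝ := fun k p => Real.exp (sy k) * |sx k - qx p| with hf
  obtain ⟨σ, -, hmin⟩ := Finset.exists_min_image (Finset.univ : Finset (Equiv.Perm (Fin n)))
    (fun τ => ∑ k, f k (τ k)) ⟨1, Finset.mem_univ 1⟩
  refine ⟨σ, ?_⟩
  intro i j hlt hmem
  have hij : i ≠ j := by rintro rfl; exact lt_irrefl _ hlt
  set σ' : Equiv.Perm (Fin n) := σ.trans (Equiv.refl _) |>.symm.symm
  have hle := hmin (Equiv.trans (Equiv.swap i j) σ) (Finset.mem_univ _)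
  have hsum : ∀ τ : Equiv.Perm (Fin n), ∑ k, f k (τ k)
      = f i (τ i) + f j (τ j) + ∑ k ∈ (Finset.univ.erase i).erase j, f k (τ k) := by
    intro τ
    rw [← Finset.add_sum_erase _ _ (Finset.mem_univ i),
      ← Finset.add_sum_erase _ _ (Finset.mem_erase.2 ⟨hij.symm, Finset.mem_univ j⟩)]
    ring
  have htail : ∑ k ∈ (Finset.univ.erase i).erase j, f k ((Equiv.trans (Equiv.swap i j) σ) k)
      = ∑ k ∈ (Finset.univ.erase i).erase j, f k (σ k) := by
    refine Finset.sum_congr rfl fun k hk => ?_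
    have hk1 := (Finset.mem_erase.1 hk).1
    have hk2 := (Finset.mem_erase.1 (Finset.mem_erase.1 hk).2).1
    simp [Equiv.swap_apply_of_ne_of_ne hk2 hk1]
  rw [hsum, hsum, htail] at hle
  simp only [Equiv.trans_apply, Equiv.swap_apply_left, Equiv.swap_apply_right] at hle
  -- hle : f i (σ i) + f j (σ j) + T ≤ f i (σ j) + f j (σ i) + T
  have hD : 0 < |qx (σ j) - qx (σ i)| := by
    rw [abs_pos, sub_ne_zero]
    exact fun h => hij.symm (σ.injective (hq h))
  have h1 : |sx i - qx (σ j)| + |qx (σ j) - qx (σ i)| = |sx i - qx (σ i)| := abs_split hmem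
  have h2 : |sx j - qx (σ i)| ≤ |sx j - qx (σ j)| + |qx (σ j) - qx (σ i)| := abs_sub_le _ _ _
  have hexp : Real.exp (sy j) < Real.exp (sy i) := Real.exp_lt_exp.2 hlt
  have hpos : 0 < Real.exp (sy j) := Real.exp_pos _
  simp only [hf] at hle
  nlinarith [mul_pos (sub_pos.2 hexp) hD, mul_le_mul_of_nonneg_left h2 hpos.le]

lemma disj_aux {n : ℕ} (P : OneSided n) (σ : Equiv.Perm (Fin n))
    (hσ : ∀ i j, (P.site j).2 < (P.site i).2 →
      (P.port (σ j)).1 ∉ Set.uIcc (P.site i).1 (P.port (σ i)).1)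
    (i j : Fin n) (hy : (P.site j).2 < (P.site i).2) :
    Disjoint (P.leader σ i) (P.leader σ j) := by
  have hij : i ≠ j := fun h => by rw [h] at hy; exact lt_irrefl _ hy
  unfold OneSided.leader hvLeader
  rw [Set.disjoint_union_left]
  constructor <;> rw [Set.disjoint_union_right] <;> constructor <;>
    rw [Set.disjoint_left] <;>
    rintro p ⟨hp1, hp2⟩ ⟨hq1, hq2⟩
  · -- H_i vs H_j
    rw [hp1] at hq1
    exact absurd (P.gp_site_y hq1.symm) hij.symm
  · -- H_i vs V_j
    rw [hq1] at hp2
    exact hσ i j hy hp2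
  · -- V_i vs H_j
    have h1 : ((P.port (σ i)).2 : ℝ) = P.B.y1 := (P.port_top (σ i)).1
    have h2 : (P.site i).2 < P.B.y1 := (P.site_mem i).2.2
    rw [h1, Set.uIcc_of_le h2.le] at hp2
    rw [hq1] at hp2
    exact absurd hp2.1 (not_le.2 hy)
  · -- V_i vs V_j
    rw [hp1] at hq1
    exact absurd (σ.injective (P.gp_port_x hq1.symm)) hij.symm

/-- every one-sided boundary labelling instance admits a feasible
solution. -/
theorem one_sided_always_feasible {n : ℕ} (P : OneSided n) :
    ∃ σ : Equiv.Perm (Fin n), P.Feasible σ := by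
  classical
  obtain ⟨σ, hσ⟩ := key (fun i => (P.site i).1) (fun i => (P.site i).2)
    (fun i => (P.port i).1) P.gp_port_x
  refine ⟨σ, ?_, ?_⟩
  · intro i p hp
    obtain ⟨hpL, hpne⟩ := hp
    have hs := P.site_mem i
    obtain ⟨hsx, hsy⟩ : (P.site i).1 ∈ Set.Ioo P.B.x0 P.B.x1 ∧
        (P.site i).2 ∈ Set.Ioo P.B.y0 P.B.y1 := hs
    obtain ⟨hpy, hpx⟩ := P.port_top (σ i)
    rcases hpL with ⟨h1, h2⟩ | ⟨h1, h2⟩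
    · refine ⟨Set.ordConnected_Ioo.uIcc_subset hsx hpx h2, ?_⟩
      rw [h1]; exact hsy
    · have h2' : p.2 ∈ Set.Icc (P.site i).2 P.B.y1 := by
        rw [hpy, Set.uIcc_of_le hsy.2.le] at h2; exact h2
      have hne : p.2 ≠ P.B.y1 := by
        intro h
        apply hpne
        have : p = ((P.port (σ i)).1, (P.port (σ i)).2) := by
          rw [Prod.ext_iff]; exact ⟨h1, by rw [h, hpy]⟩
        simp [this]
      refine ⟨by rw [h1]; exact hpx, lt_of_lt_of_le hsy.1 h2'.1, lt_of_le_of_ne h2'.2 hne⟩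
  · intro i j hij
    have hy : (P.site i).2 ≠ (P.site j).2 := fun h => hij (P.gp_site_y h)
    rcases hy.lt_or_gt with h | h
    · exact (disj_aux P σ (fun a b => hσ a b) j i h).symm
    · exact disj_aux P σ (fun a b => hσ a b) i j h
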